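/- arXiv:2009.09273 — 6 statements merged into one kernel-verified Lean document; each statement's English description precedes it below -/
import Mathlib

section
/- In a traceless Markov tower (M_n, E_n, e_n) of modulus d > 0, for every n ≥ 1 an element x ∈ M_n commutes with e_n if and only if x ∈ M_{n-1}; in particular M_{n-1} = M_n ∩ {e_n}', and if x ∈ M_n satisfies x e_n = e_n x then x = E_n(x). -/
/-- A traceless Markov tower `(Mₙ, Eₙ, eₙ)` of modulus `d > 0`: an increasing sequence of
finite-dimensional unital star subalgebras of an ambient complex star-ordered algebra `B`,
together with faithful conditional expectations `Eₙ : Mₙ → M_{n-1}` and Jones projections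
`eₙ ∈ M_{n+1}` (for `n ≥ 1`) satisfying the Temperley–Lieb–Jones relations, the relation
`eₙ x eₙ = Eₙ(x) eₙ`, the Markov condition `E_{n+1}(eₙ) = d⁻² · 1`, and the pull-down
condition `M_{n+1} eₙ = Mₙ eₙ`. -/
structure MarkovTower (B : Type*) [Ring B] [StarRing B] [Algebra ℂ B] [StarModule ℂ B]
    [PartialOrder B] [StarOrderedRing B] where
  /-- the tower of algebras -/
  M : ℕ → StarSubalgebra ℂ B
  M_le : ∀ n, M n ≤ M (n + 1)
  finDim : ∀ n, FiniteDimensional ℂ (M n)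
  /-- the modulus -/
  d : ℝ
  d_pos : 0 < d
  /-- the conditional expectations; `E n` restricts to `M n → M (n-1)` for `n ≥ 1` -/
  E : ℕ → B →ₗ[ℂ] B
  /-- the Jones projections; `e n ∈ M (n+1)` for `n ≥ 1` -/
  e : ℕ → B
  E_mem : ∀ n, 1 ≤ n → ∀ x ∈ M n, E n x ∈ M (n - 1)
  E_fix : ∀ n, 1 ≤ n → ∀ a ∈ M (n - 1), E n a = a
  E_bimod : ∀ n, 1 ≤ n → ∀ a ∈ M (n - 1), ∀ b ∈ M (n - 1), ∀ x ∈ M n,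
    E n (a * x * b) = a * E n x * b
  E_pos : ∀ n, 1 ≤ n → ∀ x ∈ M n, 0 ≤ E n (star x * x)
  E_faithful : ∀ n, 1 ≤ n → ∀ x ∈ M n, E n (star x * x) = 0 → x = 0
  e_mem : ∀ n, 1 ≤ n → e n ∈ M (n + 1)
  e_idem : ∀ n, 1 ≤ n → e n * e n = e n
  e_star : ∀ n, 1 ≤ n → star (e n) = e n
  e_comm : ∀ m n, 1 ≤ m → 1 ≤ n → m + 1 < n → e m * e n = e n * e m
  e_tlj_up : ∀ n, 1 ≤ n → e n * e (n + 1) * e n = ((d : ℂ) ^ 2)⁻¹ • e n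
  e_tlj_down : ∀ n, 1 ≤ n → e (n + 1) * e n * e (n + 1) = ((d : ℂ) ^ 2)⁻¹ • e (n + 1)
  jones_rel : ∀ n, 1 ≤ n → ∀ x ∈ M n, e n * x * e n = E n x * e n
  markov : ∀ n, 1 ≤ n → E (n + 1) (e n) = ((d : ℂ) ^ 2)⁻¹ • (1 : B)
  pull_down : ∀ n, 1 ≤ n → ∀ x ∈ M (n + 1), ∃ y ∈ M n, x * e n = y * e n

/-! Every `a ∈ M_{n-1}` commutes with `eₙ`: `eₙ a eₙ = Eₙ(a) eₙ = a eₙ`, and taking adjoints gives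
`eₙ a eₙ = eₙ a`. Conversely, right multiplication by `eₙ` is injective on `Mₙ`, because
`E_{n+1}(y eₙ) = d⁻² y` by the Markov condition. So if `x ∈ Mₙ` commutes with `eₙ`, then
`x eₙ = eₙ x eₙ = Eₙ(x) eₙ` forces `x = Eₙ(x) ∈ M_{n-1}`. -/

namespace MarkovTower

variable {B : Type*} [Ring B] [StarRing B] [Algebra ℂ B] [StarModule ℂ B]
  [PartialOrder B] [StarOrderedRing B] (T : MarkovTower B)

theorem M_pred_le (n : ℕ) : T.M (n - 1) ≤ T.M n := by
  cases n with
  | zero => exact le_rfl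
  | succ n => exact T.M_le n

theorem commute_e_of_mem_pred {n : ℕ} (hn : 1 ≤ n) {a : B} (ha : a ∈ T.M (n - 1)) :
    Commute a (T.e n) := by
  have sandwich : ∀ b ∈ T.M (n - 1), T.e n * b * T.e n = b * T.e n := fun b hb => by
    rw [T.jones_rel n hn b (T.M_pred_le n hb), T.E_fix n hn b hb]
  have hstar := congrArg star (sandwich (star a) (star_mem ha))
  simp only [star_mul, star_star, T.e_star n hn, ← mul_assoc] at hstar
  exact (sandwich a ha).symm.trans hstar

theorem E_succ_mul_e {n : ℕ} (hn : 1 ≤ n) {y : B} (hy : y ∈ T.M n) :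
    T.E (n + 1) (y * T.e n) = ((T.d : ℂ) ^ 2)⁻¹ • y := by
  have hbimod := T.E_bimod (n + 1) (by omega) y hy 1 (one_mem _) (T.e n) (T.e_mem n hn)
  rw [mul_one, mul_one] at hbimod
  rw [hbimod, T.markov n hn, mul_smul_comm, mul_one]

theorem eq_of_mul_e_eq {n : ℕ} (hn : 1 ≤ n) {x y : B} (hx : x ∈ T.M n) (hy : y ∈ T.M n)
    (hxy : x * T.e n = y * T.e n) : x = y := by
  have hd : ((T.d : ℂ) ^ 2)⁻¹ ≠ 0 := inv_ne_zero (pow_ne_zero 2 (by exact_mod_cast T.d_pos.ne'))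
  have := congrArg (T.E (n + 1)) hxy
  rw [T.E_succ_mul_e hn hx, T.E_succ_mul_e hn hy] at this
  exact smul_right_injective B hd this

theorem eq_E_of_commute_e {n : ℕ} (hn : 1 ≤ n) {x : B} (hx : x ∈ T.M n)
    (hcomm : Commute x (T.e n)) : x = T.E n x := by
  have hEx : T.E n x ∈ T.M n := T.M_pred_le n (T.E_mem n hn x hx)
  refine T.eq_of_mul_e_eq hn hx hEx ?_
  calc x * T.e n = x * (T.e n * T.e n) := by rw [T.e_idem n hn]
    _ = T.e n * x * T.e n := by rw [← mul_assoc, hcomm.eq]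
    _ = T.E n x * T.e n := T.jones_rel n hn x hx

theorem commute_e_iff_mem_pred {n : ℕ} (hn : 1 ≤ n) {x : B} (hx : x ∈ T.M n) :
    Commute x (T.e n) ↔ x ∈ T.M (n - 1) := by
  refine ⟨fun hcomm => ?_, T.commute_e_of_mem_pred hn⟩
  rw [T.eq_E_of_commute_e hn hx hcomm]
  exact T.E_mem n hn x hx

end MarkovTower

/-- In a traceless Markov tower, for `n ≥ 1`, an element `x ∈ Mₙ` commutes with `eₙ`
iff `x ∈ M_{n-1}`; in particular `M_{n-1} = Mₙ ∩ {eₙ}'`, and any `x ∈ Mₙ` commuting with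
`eₙ` satisfies `x = Eₙ(x)`. -/
theorem MarkovTower.relative_commutant_jones
    {B : Type*} [Ring B] [StarRing B] [Algebra ℂ B] [StarModule ℂ B]
    [PartialOrder B] [StarOrderedRing B]
    (T : MarkovTower B) (n : ℕ) (hn : 1 ≤ n) :
    (∀ x ∈ T.M n, (x * T.e n = T.e n * x ↔ x ∈ T.M (n - 1))) ∧
    ((T.M (n - 1) : Set B) = (T.M n : Set B) ∩ {b : B | b * T.e n = T.e n * b}) ∧
    (∀ x ∈ T.M n, x * T.e n = T.e n * x → x = T.E n x) := by
  refine ⟨fun x hx => T.commute_e_iff_mem_pred hn hx, ?_, fun x hx => T.eq_E_of_commute_e hn hx⟩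
  ext b
  exact ⟨fun hb => ⟨T.M_pred_le n hb, T.commute_e_of_mem_pred hn hb⟩,
    fun ⟨hb, hcomm⟩ => (T.commute_e_iff_mem_pred hn hb).mp hcomm⟩
end

section
/- In a standard λ-lattice (A_{i,j})_{0≤i≤j} of modulus d > 0, the 2-shift map satisfies the shift (intertwining) property: for every x ∈ A_{i,j}, (e_{i+1} e_{i+2} ⋯ e_{j+1}) · x = S_{i,j}(x) · (e_{i+1} e_{i+2} ⋯ e_{j+1}); equivalently, taking adjoints, x · (e_{j+1} e_j ⋯ e_{i+1}) = (e_{j+1} e_j ⋯ e_{i+1}) · S_{i,j}(x). -/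
/-- A standard λ-lattice `(A_{i,j})_{0 ≤ i ≤ j}` of modulus `d > 0`: a doubly indexed system of
finite-dimensional unital star subalgebras `A i j` of an ambient complex star-ordered algebra
`B`, with `A i i = ℂ`, inclusions `A i j ≤ A k l` for `k ≤ i ≤ j ≤ l`, faithful horizontal and
vertical conditional expectations `Er i j : A i j → A i (j-1)` and `El i j : A i j → A (i+1) j`
forming commuting squares, Jones projections `e j ∈ A i k` (for `i ≤ j`, `j + 1 ≤ k`)
satisfying the Temperley–Lieb–Jones relations, the implementation relations
`e_j x e_j = Er_{i,j}(x) e_j` and `e_i x e_i = El_{i,j}(x) e_i`, the Markov conditions,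
the pull-down conditions, and the standardness condition `[A_{i,j}, A_{k,l}] = 0` for
`i ≤ j ≤ k ≤ l`. -/
structure StandardLambdaLattice (B : Type*) [Ring B] [StarRing B] [Algebra ℂ B]
    [StarModule ℂ B] [PartialOrder B] [StarOrderedRing B] where
  /-- the lattice of algebras -/
  A : ℕ → ℕ → StarSubalgebra ℂ B
  /-- the modulus -/
  d : ℝ
  d_pos : 0 < d
  finDim : ∀ i j, FiniteDimensional ℂ (A i j)
  A_diag : ∀ i, A i i = ⊥
  A_mono : ∀ i j k l, k ≤ i → i ≤ j → j ≤ l → A i j ≤ A k l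
  /-- the horizontal (right) conditional expectations -/
  Er : ℕ → ℕ → B →ₗ[ℂ] B
  /-- the vertical (left) conditional expectations -/
  El : ℕ → ℕ → B →ₗ[ℂ] B
  /-- the Jones projections -/
  e : ℕ → B
  Er_mem : ∀ i j, i < j → ∀ x ∈ A i j, Er i j x ∈ A i (j - 1)
  Er_fix : ∀ i j, i < j → ∀ a ∈ A i (j - 1), Er i j a = a
  Er_bimod : ∀ i j, i < j → ∀ a ∈ A i (j - 1), ∀ b ∈ A i (j - 1), ∀ x ∈ A i j,
    Er i j (a * x * b) = a * Er i j x * b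
  Er_pos : ∀ i j, i < j → ∀ x ∈ A i j, 0 ≤ Er i j (star x * x)
  Er_faithful : ∀ i j, i < j → ∀ x ∈ A i j, Er i j (star x * x) = 0 → x = 0
  El_mem : ∀ i j, i < j → ∀ x ∈ A i j, El i j x ∈ A (i + 1) j
  El_fix : ∀ i j, i < j → ∀ a ∈ A (i + 1) j, El i j a = a
  El_bimod : ∀ i j, i < j → ∀ a ∈ A (i + 1) j, ∀ b ∈ A (i + 1) j, ∀ x ∈ A i j,
    El i j (a * x * b) = a * El i j x * b
  El_pos : ∀ i j, i < j → ∀ x ∈ A i j, 0 ≤ El i j (star x * x)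
  El_faithful : ∀ i j, i < j → ∀ x ∈ A i j, El i j (star x * x) = 0 → x = 0
  comm_sq : ∀ i j, i < j → ∀ x ∈ A i (j + 1),
    El i j (Er i (j + 1) x) = Er (i + 1) (j + 1) (El i (j + 1) x)
  e_mem : ∀ i j k, 1 ≤ j → i ≤ j → j + 1 ≤ k → e j ∈ A i k
  e_idem : ∀ j, 1 ≤ j → e j * e j = e j
  e_star : ∀ j, 1 ≤ j → star (e j) = e j
  e_comm : ∀ m n, 1 ≤ m → 1 ≤ n → m + 1 < n → e m * e n = e n * e m
  e_tlj_up : ∀ j, 1 ≤ j → e j * e (j + 1) * e j = ((d : ℂ) ^ 2)⁻¹ • e j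
  e_tlj_down : ∀ j, 1 ≤ j → e (j + 1) * e j * e (j + 1) = ((d : ℂ) ^ 2)⁻¹ • e (j + 1)
  e_Er : ∀ i j, i + 1 ≤ j → ∀ x ∈ A i j, e j * x * e j = Er i j x * e j
  e_El : ∀ i j, 1 ≤ i → i + 1 ≤ j → ∀ x ∈ A i j, e i * x * e i = El i j x * e i
  markov_Er : ∀ i j, i + 1 ≤ j → Er i (j + 1) (e j) = ((d : ℂ) ^ 2)⁻¹ • (1 : B)
  markov_El : ∀ j k, 1 ≤ j → j + 1 ≤ k → El (j - 1) k (e j) = ((d : ℂ) ^ 2)⁻¹ • (1 : B)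
  pull_down_r : ∀ i j, i ≤ j → 1 ≤ j → ∀ x ∈ A i (j + 1),
    (((d : ℂ) ^ 2) • Er i (j + 1) (x * e j)) * e j = x * e j
  pull_down_l : ∀ i j, 1 ≤ i → i ≤ j → ∀ x ∈ A (i - 1) j,
    (((d : ℂ) ^ 2) • El (i - 1) j (x * e i)) * e i = x * e i
  standard : ∀ i j k l, i ≤ j → j ≤ k → k ≤ l → ∀ x ∈ A i j, ∀ y ∈ A k l, x * y = y * x

namespace StandardLambdaLattice

variable {B : Type*} [Ring B] [StarRing B] [Algebra ℂ B] [StarModule ℂ B]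
  [PartialOrder B] [StarOrderedRing B]

/-- The ascending product of Jones projections `e_{i+1} e_{i+2} ⋯ e_j`
(equal to `1` when `j ≤ i`). -/
def ascProd (L : StandardLambdaLattice B) (i j : ℕ) : B :=
  ((List.range' (i + 1) (j - i)).map L.e).prod

/-- The descending product of Jones projections `e_{j+1} e_j ⋯ e_{i+1}`. -/
def descProd (L : StandardLambdaLattice B) (i j : ℕ) : B :=
  (((List.range' (i + 1) (j + 1 - i)).map L.e).reverse).prod

/-- The 2-shift map
`S_{i,j}(x) := d^{2j-2i+2} · El_{i,j+2} (e_{i+1} e_{i+2} ⋯ e_j · x · e_{j+1} e_j ⋯ e_{i+1})`. -/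
noncomputable def S (L : StandardLambdaLattice B) (i j : ℕ) (x : B) : B :=
  ((L.d : ℂ) ^ (2 * (j - i) + 2)) • L.El i (j + 2) (L.ascProd i j * x * L.descProd i j)

end StandardLambdaLattice

/-! The pull-down condition `El (y e_{i+1}) e_{i+1} = d⁻² y e_{i+1}` turns
`S_{i,j}(x) e_{i+1} ⋯ e_{j+1}` into
`d^{2(j-i)} e_{i+1} ⋯ e_j x (e_{j+1} ⋯ e_{i+1}) (e_{i+2} ⋯ e_{j+1})`, and the Temperley–Lieb
relations collapse the last two factors to `d^{-2(j-i)} e_{j+1}`, which commutes with `x` by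
standardness. The second identity is the adjoint of the first one for `x*`: `El` is
positive, hence star-preserving, so `S_{i,j}(x)* = S_{i,j}(x*)`. -/

open scoped ComplexStarModule

theorem LinearMap.isSelfAdjoint_apply_of_nonneg_star_mul_self {A B : Type*}
    [Ring A] [StarRing A] [Algebra ℂ A] [StarModule ℂ A]
    [NonUnitalRing B] [StarRing B] [Module ℂ B] [StarModule ℂ B] [PartialOrder B]
    [StarOrderedRing B] (φ : A →ₗ[ℂ] B) (S : StarSubalgebra ℂ A)
    (hφ : ∀ z ∈ S, 0 ≤ φ (star z * z)) {a : A} (ha : a ∈ S) (hsa : IsSelfAdjoint a) :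
    IsSelfAdjoint (φ a) := by
  have polarization : (4 : ℂ) • a = star (1 + a) * (1 + a) - star (1 - a) * (1 - a) := by
    simp only [star_add, star_sub, star_one, hsa.star_eq]
    rw [show (4 : ℂ) = ((4 : ℕ) : ℂ) by norm_num, Nat.cast_smul_eq_nsmul]
    noncomm_ring
  have h4 : IsSelfAdjoint ((4 : ℂ) • φ a) := by
    rw [← map_smul, polarization, map_sub]
    exact (hφ _ (add_mem (one_mem S) ha)).isSelfAdjoint.sub
      (hφ _ (sub_mem (one_mem S) ha)).isSelfAdjoint
  have h : IsSelfAdjoint ((4 : ℂ)⁻¹) := by simp [IsSelfAdjoint]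
  simpa [smul_smul] using h.smul h4

theorem LinearMap.map_star_of_nonneg_star_mul_self {A B : Type*}
    [Ring A] [StarRing A] [Algebra ℂ A] [StarModule ℂ A]
    [NonUnitalRing B] [StarRing B] [Module ℂ B] [StarModule ℂ B] [PartialOrder B]
    [StarOrderedRing B] (φ : A →ₗ[ℂ] B) (S : StarSubalgebra ℂ A)
    (hφ : ∀ z ∈ S, 0 ≤ φ (star z * z)) {z : A} (hz : z ∈ S) :
    φ (star z) = star (φ z) := by
  have hre : (ℜ z : A) ∈ S := by
    rw [realPart_apply_coe, ← Complex.coe_smul]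
    exact S.smul_mem (add_mem hz (star_mem hz)) _
  have him : (ℑ z : A) ∈ S := by
    rw [imaginaryPart_apply_coe, ← Complex.coe_smul]
    exact S.smul_mem (S.smul_mem (sub_mem hz (star_mem hz)) _) _
  have hφre := φ.isSelfAdjoint_apply_of_nonneg_star_mul_self S hφ hre (ℜ z).2
  have hφim := φ.isSelfAdjoint_apply_of_nonneg_star_mul_self S hφ him (ℑ z).2
  rw [← realPart_add_I_smul_imaginaryPart z]
  simp only [star_add, star_smul, map_add, map_smul, (ℜ z).2.star_eq, (ℑ z).2.star_eq,
    hφre.star_eq, hφim.star_eq]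

namespace StandardLambdaLattice

variable {B : Type*} [Ring B] [StarRing B] [Algebra ℂ B] [StarModule ℂ B]
  [PartialOrder B] [StarOrderedRing B] (L : StandardLambdaLattice B)

theorem El_star {i j : ℕ} (hij : i < j) {z : B} (hz : z ∈ L.A i j) :
    L.El i j (star z) = star (L.El i j z) :=
  (L.El i j).map_star_of_nonneg_star_mul_self (L.A i j) (L.El_pos i j hij) hz

theorem ascProd_self (i : ℕ) : L.ascProd i i = 1 := by
  simp [ascProd]

theorem ascProd_succ {i j : ℕ} (hij : i ≤ j) :
    L.ascProd i (j + 1) = L.ascProd i j * L.e (j + 1) := by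
  rw [ascProd, ascProd, Nat.sub_add_comm hij, List.range'_concat, List.map_append,
    List.prod_append, List.map_singleton, List.prod_singleton]
  congr 2
  omega

theorem ascProd_eq_e_mul {i j : ℕ} (hij : i < j) :
    L.ascProd i j = L.e (i + 1) * L.ascProd (i + 1) j := by
  rw [ascProd, ascProd, show j - i = j - (i + 1) + 1 by omega, List.range'_succ]
  rfl

theorem descProd_self (i : ℕ) : L.descProd i i = L.e (i + 1) := by
  simp [descProd]

theorem descProd_succ {i j : ℕ} (hij : i ≤ j) :
    L.descProd i (j + 1) = L.e (j + 2) * L.descProd i j := by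
  rw [descProd, descProd, show j + 1 + 1 - i = j + 1 - i + 1 by omega, List.range'_concat,
    List.map_append, List.reverse_append, List.prod_append, List.map_singleton,
    List.reverse_singleton, List.prod_singleton]
  congr 2
  omega

theorem descProd_eq_mul_e {i j : ℕ} (hij : i ≤ j) :
    L.descProd i j = L.descProd (i + 1) j * L.e (i + 1) := by
  rw [descProd, descProd, show j + 1 - i = j + 1 - (i + 1) + 1 by omega, List.range'_succ,
    List.map_cons, List.reverse_cons, List.prod_append, List.prod_singleton]

theorem star_ascProd_succ (i j : ℕ) : star (L.ascProd i (j + 1)) = L.descProd i j := by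
  have h :=
    unop_map_list_prod (starMulEquiv (R := B)) ((List.range' (i + 1) (j + 1 - i)).map L.e)
  rw [ascProd, descProd]
  refine h.trans ?_
  rw [List.map_map]
  congr 2
  refine List.map_congr_left fun m hm => L.e_star m ?_
  rw [List.mem_range'_1] at hm
  omega

theorem star_descProd (i j : ℕ) : star (L.descProd i j) = L.ascProd i (j + 1) := by
  rw [← star_ascProd_succ, star_star]

theorem ascProd_mem {i s j k : ℕ} (his : i ≤ s) (hjk : j < k) : L.ascProd s j ∈ L.A i k := by
  refine list_prod_mem fun y hy => ?_
  obtain ⟨m, hm, rfl⟩ := List.mem_map.mp hy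
  rw [List.mem_range'_1] at hm
  exact L.e_mem i m k (by omega) (by omega) (by omega)

theorem descProd_mem {i s j k : ℕ} (his : i ≤ s) (hjk : j + 1 < k) :
    L.descProd s j ∈ L.A i k := by
  rw [← star_ascProd_succ]
  exact star_mem (L.ascProd_mem his hjk)

theorem ascProd_mul_mul_descProd_mem {i s j : ℕ} (his : i ≤ s) (hij : i ≤ j) {x : B}
    (hx : x ∈ L.A i j) : L.ascProd i j * x * L.descProd s j ∈ L.A i (j + 2) := by
  refine mul_mem (mul_mem (L.ascProd_mem le_rfl (by omega)) ?_) (L.descProd_mem his (by omega))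
  exact L.A_mono i j i (j + 2) le_rfl hij (by omega) hx

theorem descProd_eq_e_mul_star_ascProd {i j : ℕ} (hij : i ≤ j) :
    L.descProd i j = L.e (j + 1) * star (L.ascProd i j) := by
  rw [← star_ascProd_succ, ascProd_succ L hij, star_mul, L.e_star _ (by omega)]

theorem descProd_mul_ascProd {i j : ℕ} (hij : i ≤ j) :
    L.descProd i j * L.ascProd (i + 1) (j + 1) =
      ((L.d : ℂ) ^ 2)⁻¹ ^ (j - i) • L.e (j + 1) := by
  induction j, hij using Nat.le_induction with
  | base => simp only [descProd_self, ascProd_self, mul_one, Nat.sub_self, pow_zero, one_smul]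
  | succ j hij ih =>
    have htlj : L.e (j + 2) * L.e (j + 1) * L.e (j + 2) = ((L.d : ℂ) ^ 2)⁻¹ • L.e (j + 2) :=
      L.e_tlj_down (j + 1) (by omega)
    calc L.descProd i (j + 1) * L.ascProd (i + 1) (j + 1 + 1)
        = L.e (j + 2) * (L.descProd i j * L.ascProd (i + 1) (j + 1)) * L.e (j + 2) := by
          rw [descProd_succ L hij, ascProd_succ L (by omega)]
          simp only [mul_assoc]
      _ = ((L.d : ℂ) ^ 2)⁻¹ ^ (j + 1 - i) • L.e (j + 1 + 1) := by
          rw [ih, mul_smul_comm, smul_mul_assoc, htlj, smul_smul, ← pow_succ,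
            Nat.sub_add_comm hij]

theorem commute_e_succ {i j : ℕ} (hij : i ≤ j) {x : B} (hx : x ∈ L.A i j) :
    Commute x (L.e (j + 1)) :=
  L.standard i j j (j + 2) hij le_rfl (by omega) x hx _
    (L.e_mem j (j + 1) (j + 2) (by omega) (by omega) le_rfl)

theorem d_sq_ne_zero : (L.d : ℂ) ^ 2 ≠ 0 :=
  pow_ne_zero 2 (Complex.ofReal_ne_zero.mpr L.d_pos.ne')

theorem El_mul_e_mul_e {i k : ℕ} (hik : i < k) {y : B} (hy : y ∈ L.A i k) :
    L.El i k (y * L.e (i + 1)) * L.e (i + 1) = ((L.d : ℂ) ^ 2)⁻¹ • (y * L.e (i + 1)) := by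
  have h := L.pull_down_l (i + 1) k (by omega) (by omega) y hy
  simp only [Nat.add_sub_cancel] at h
  conv_rhs => rw [← h]
  rw [smul_mul_assoc, smul_smul, inv_mul_cancel₀ L.d_sq_ne_zero, one_smul]

theorem S_mul_ascProd_succ {i j : ℕ} (hij : i ≤ j) {x : B} (hx : x ∈ L.A i j) :
    L.S i j x * L.ascProd i (j + 1) = L.ascProd i (j + 1) * x := by
  set y := L.ascProd i j * x * L.descProd (i + 1) j
  have hy : y ∈ L.A i (j + 2) := L.ascProd_mul_mul_descProd_mem (by omega) hij hx
  have hsandwich : L.ascProd i j * x * L.descProd i j = y * L.e (i + 1) := by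
    rw [descProd_eq_mul_e L hij]
    simp only [y, mul_assoc]
  have hscalar :
      (L.d : ℂ) ^ (2 * (j - i) + 2) * ((L.d : ℂ) ^ 2)⁻¹ * ((L.d : ℂ) ^ 2)⁻¹ ^ (j - i) = 1 := by
    rw [mul_assoc, ← pow_succ', show 2 * (j - i) + 2 = 2 * (j - i + 1) by ring, pow_mul,
      ← mul_pow, mul_inv_cancel₀ L.d_sq_ne_zero, one_pow]
  calc L.S i j x * L.ascProd i (j + 1)
      = (L.d : ℂ) ^ (2 * (j - i) + 2) •
          (L.El i (j + 2) (y * L.e (i + 1)) * L.e (i + 1) * L.ascProd (i + 1) (j + 1)) := by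
        rw [S, hsandwich, ascProd_eq_e_mul L (by omega : i < j + 1), smul_mul_assoc]
        simp only [mul_assoc]
    _ = ((L.d : ℂ) ^ (2 * (j - i) + 2) * ((L.d : ℂ) ^ 2)⁻¹) •
          (L.ascProd i j * x * (L.descProd i j * L.ascProd (i + 1) (j + 1))) := by
        rw [L.El_mul_e_mul_e (by omega) hy, ← hsandwich, smul_mul_assoc, smul_smul]
        simp only [mul_assoc]
    _ = L.ascProd i j * (x * L.e (j + 1)) := by
        rw [descProd_mul_ascProd L hij, mul_smul_comm, smul_smul, hscalar, one_smul, mul_assoc]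
    _ = L.ascProd i (j + 1) * x := by
        rw [(L.commute_e_succ hij hx).eq, ascProd_succ L hij, mul_assoc]

theorem star_S {i j : ℕ} (hij : i ≤ j) {x : B} (hx : x ∈ L.A i j) :
    star (L.S i j x) = L.S i j (star x) := by
  have hstar : star (L.ascProd i j * x * L.descProd i j)
      = L.ascProd i j * star x * L.descProd i j := by
    rw [star_mul, star_mul, star_descProd, ascProd_succ L hij,
      descProd_eq_e_mul_star_ascProd L hij, mul_assoc, ← mul_assoc (L.e (j + 1)),
      ← (L.commute_e_succ hij (star_mem hx)).eq]
    simp only [mul_assoc]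
  rw [S, S, star_smul, ← L.El_star (by omega) (L.ascProd_mul_mul_descProd_mem le_rfl hij hx),
    hstar, star_pow, Complex.star_def, Complex.conj_ofReal]

end StandardLambdaLattice

/-- The shift (intertwining) property of the 2-shift map: for `x ∈ A_{i,j}`,
`(e_{i+1} e_{i+2} ⋯ e_{j+1}) x = S_{i,j}(x) (e_{i+1} e_{i+2} ⋯ e_{j+1})`, and, taking
adjoints, `x (e_{j+1} e_j ⋯ e_{i+1}) = (e_{j+1} e_j ⋯ e_{i+1}) S_{i,j}(x)`. -/
theorem StandardLambdaLattice.twoShift_shift_property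
    {B : Type*} [Ring B] [StarRing B] [Algebra ℂ B] [StarModule ℂ B]
    [PartialOrder B] [StarOrderedRing B]
    (L : StandardLambdaLattice B) (i j : ℕ) (hij : i ≤ j) (x : B) (hx : x ∈ L.A i j) :
    L.ascProd i (j + 1) * x = L.S i j x * L.ascProd i (j + 1) ∧
    x * L.descProd i j = L.descProd i j * L.S i j x := by
  refine ⟨(L.S_mul_ascProd_succ hij hx).symm, ?_⟩
  have h := congrArg star (L.S_mul_ascProd_succ hij (star_mem hx))
  rwa [star_mul, star_mul, star_ascProd_succ, star_star, L.star_S hij (star_mem hx), star_star,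
    eq_comm] at h
end

section
/- Let (Λ, ω) be a balanced d-fair bipartite graph (d > 0). Then Λ is locally finite with valence uniformly bounded by d²: for every vertex P, the set {e ∈ E(Λ) : s(e) = P} is finite with cardinality at most d², and likewise the set {e ∈ E(Λ) : t(e) = P} is finite with cardinality at most d². -/
/-- A balanced `d`-fair bipartite graph `(Λ, ω)`: a bipartite graph with vertex set
`V = V₀ ⊔ V₁`, source and target maps `s, t`, an involution `e ↦ ē` on edges switching
sources and targets, and a positive edge weighting `ω` satisfying `ω(e)·ω(ē) = 1`
(balanced) and, for every vertex `P`, `∑_{s(e) = P} ω(e) = d` (`d`-fair). -/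
structure BalancedFairBipartiteGraph where
  /-- the vertex set -/
  V : Type*
  /-- the edge set -/
  Edge : Type*
  /-- the source map -/
  s : Edge → V
  /-- the target map -/
  t : Edge → V
  /-- the even vertices -/
  V0 : Set V
  /-- the odd vertices -/
  V1 : Set V
  cover : V0 ∪ V1 = Set.univ
  disj : Disjoint V0 V1
  bipartite : ∀ e : Edge, (s e ∈ V0 ∧ t e ∈ V1) ∨ (s e ∈ V1 ∧ t e ∈ V0)
  /-- the involution on edges -/
  bar : Edge → Edge
  bar_invol : Function.Involutive bar
  s_bar : ∀ e, s (bar e) = t e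
  t_bar : ∀ e, t (bar e) = s e
  /-- the edge weighting -/
  w : Edge → ℝ
  w_pos : ∀ e, 0 < w e
  /-- the fairness constant -/
  d : ℝ
  d_pos : 0 < d
  balanced : ∀ e, w e * w (bar e) = 1
  fair : ∀ P : V, HasSum (fun e : {e : Edge // s e = P} => w e.1) d

/- Fairness bounds each weight by `d`, so balance bounds it below by `d⁻¹`; a family of reals
bounded below by `d⁻¹` and summing to `d` has at most `d²` members. The edges with target `P`
are handled by transporting them along `e ↦ ē` to the edges with source `P`. -/

theorem HasSum.finite_and_natCard_mul_le {ι : Type*} {f : ι → ℝ} {a c : ℝ} (hf : HasSum f a)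
    (hc : 0 < c) (hcf : ∀ i, c ≤ f i) : Finite ι ∧ Nat.card ι * c ≤ a := by
  have hfin : Finite ι := by
    by_contra hinf
    have : Infinite ι := not_finite_iff_infinite.mp hinf
    have hconst : Summable fun _ : ι => c :=
      hf.summable.of_nonneg_of_le (fun _ => hc.le) hcf
    exact hc.ne' ((summable_const_iff c).mp hconst)
  refine ⟨hfin, ?_⟩
  have := Fintype.ofFinite ι
  simpa [Nat.card_eq_fintype_card] using hasSum_le hcf (hasSum_fintype fun _ => c) hf

namespace BalancedFairBipartiteGraph

variable (G : BalancedFairBipartiteGraph)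

theorem w_le_d (e : G.Edge) : G.w e ≤ G.d :=
  le_hasSum (G.fair (G.s e)) ⟨e, rfl⟩ fun e' _ => (G.w_pos e'.1).le

theorem d_inv_le_w (e : G.Edge) : G.d⁻¹ ≤ G.w e := by
  rw [inv_le_iff_one_le_mul₀ G.d_pos, ← G.balanced e]
  exact mul_le_mul_of_nonneg_left (G.w_le_d (G.bar e)) (G.w_pos e).le

def barEquiv (P : G.V) : {e : G.Edge // G.t e = P} ≃ {e : G.Edge // G.s e = P} where
  toFun e := ⟨G.bar e, (G.s_bar e).trans e.2⟩
  invFun e := ⟨G.bar e, (G.t_bar e).trans e.2⟩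
  left_inv e := Subtype.ext (G.bar_invol e)
  right_inv e := Subtype.ext (G.bar_invol e)

theorem hasSum_w_bar_of_t_eq (P : G.V) :
    HasSum (fun e : {e : G.Edge // G.t e = P} => G.w (G.bar e)) G.d :=
  (G.barEquiv P).hasSum_iff.mpr (G.fair P)

theorem finite_and_ncard_le_d_sq {S : Set G.Edge} (f : G.Edge → G.Edge)
    (hf : HasSum (fun e : S => G.w (f e)) G.d) : S.Finite ∧ (S.ncard : ℝ) ≤ G.d ^ 2 := by
  obtain ⟨hfin, hcard⟩ :=
    hf.finite_and_natCard_mul_le (inv_pos.mpr G.d_pos) fun _ => G.d_inv_le_w _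
  refine ⟨Set.finite_coe_iff.mp hfin, ?_⟩
  rwa [Nat.card_coe_set_eq, ← le_div_iff₀ (inv_pos.mpr G.d_pos), div_inv_eq_mul, ← sq]
    at hcard

end BalancedFairBipartiteGraph

/-- A balanced `d`-fair bipartite graph is locally finite, with valence uniformly bounded
by `d²`: for every vertex `P`, the set of edges with source `P` is finite of cardinality at
most `d²`, and likewise for the set of edges with target `P`. -/
theorem BalancedFairBipartiteGraph.locally_finite
    (G : BalancedFairBipartiteGraph) (P : G.V) :
    ({e : G.Edge | G.s e = P}.Finite ∧
      (({e : G.Edge | G.s e = P}.ncard : ℝ) ≤ G.d ^ 2)) ∧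
    ({e : G.Edge | G.t e = P}.Finite ∧
      (({e : G.Edge | G.t e = P}.ncard : ℝ) ≤ G.d ^ 2)) :=
  ⟨G.finite_and_ncard_le_d_sq id (G.fair P),
    G.finite_and_ncard_le_d_sq G.bar (G.hasSum_w_bar_of_t_eq P)⟩
end

section
/- Let B be a finite-dimensional unital C*-algebra, A ⊆ B a unital C*-subalgebra, and E : B → A a faithful conditional expectation. Then there exists a finite family u₁, …, u_n ∈ B (a Pimsner–Popa orthonormal basis) such that x = Σ_{i=1}^{n} u_i · E(u_i* x) for all x ∈ B. -/
/-!
Take a ℂ-basis `b` of `B` and its frame operator `S x = ∑ bᵢ E(bᵢ⋆ x)`. For the `B`-valued form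
`⟪x, y⟫ = E(x⋆ y)`, `S` is symmetric, commutes with right multiplication by elements of the range
of `E`, and `⟪x, S x⟫ = ∑ E(bᵢ⋆ x)⋆ E(bᵢ⋆ x)` is positive and, by faithfulness, vanishes only at
`x = 0`. Hence the eigenvalues of `S` are positive reals, and symmetry together with faithfulness
rules out Jordan blocks, so a real polynomial `q` interpolating `λ ↦ λ^(-1/2)` on the spectrum
gives `g = q(S)` with `g S g = 1`. As `g` is again symmetric and right `E`-linear, the family
`uᵢ = g bᵢ` has frame operator `g S g = 1`.
-/

open Polynomial
open scoped ComplexOrder ComplexStarModule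

namespace Module.End

section AlgClosed

variable {K V : Type*} [Field K] [IsAlgClosed K] [AddCommGroup V] [Module K V]
  [FiniteDimensional K V] {f : End K V}

theorem aeval_eq_zero_of_forall_hasEigenvalue
    (hf : ∀ μ, f.HasEigenvalue μ → ∀ v, (f - μ • 1) ((f - μ • 1) v) = 0 → (f - μ • 1) v = 0)
    {p : K[X]} (hp : ∀ μ, f.HasEigenvalue μ → p.eval μ = 0) : aeval f p = 0 := by
  suffices ⨆ μ, f.maxGenEigenspace μ ≤ LinearMap.ker (aeval f p) by
    rwa [iSup_maxGenEigenspace_eq_top, top_le_iff, LinearMap.ker_eq_top] at this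
  refine iSup_le fun μ v hv => ?_
  obtain rfl | hv0 := eq_or_ne v 0
  · exact zero_mem _
  have hμ : f.HasEigenvalue μ :=
    (hasUnifEigenvalue_iff_hasUnifEigenvalue_one ENat.top_pos).mp
      (HasUnifEigenvector.hasUnifEigenvalue ⟨hv, hv0⟩)
  have hcollapse (k : ℕ) :
      ∀ w, ((f - μ • 1 : End K V) ^ (k + 1)) w = 0 → (f - μ • 1) w = 0 := by
    induction k with
    | zero => intro w h; simpa using h
    | succ k ih =>
      intro w h
      exact hf μ hμ w (ih _ (by rwa [← Module.End.mul_apply, ← pow_succ]))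
  obtain ⟨k, hk⟩ := (mem_maxGenEigenspace f μ v).mp hv
  have hvec : f.HasEigenvector μ v := by
    refine ⟨mem_eigenspace_iff.mpr (sub_eq_zero.mp ?_), hv0⟩
    simpa using hcollapse k v (by rw [pow_succ', Module.End.mul_apply, hk, map_zero])
  simp [aeval_apply_of_hasEigenvector hvec, hp μ hμ]

end AlgClosed

theorem exists_aeval_mul_mul_aeval_eq_one {V : Type*} [AddCommGroup V] [Module ℂ V]
    [FiniteDimensional ℂ V] {f : End ℂ V}
    (hf : ∀ μ, f.HasEigenvalue μ → ∀ v, (f - μ • 1) ((f - μ • 1) v) = 0 → (f - μ • 1) v = 0)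
    (hpos : ∀ μ, f.HasEigenvalue μ → 0 < μ) :
    ∃ q : ℝ[X], aeval f q * f * aeval f q = 1 := by
  let s : Finset ℝ := f.finite_hasEigenvalue.toFinset.image Complex.re
  let q : ℝ[X] := Lagrange.interpolate s id fun r => (√r)⁻¹
  refine ⟨q, ?_⟩
  have hq : aeval f (q * X * q - 1) = 0 := by
    rw [← aeval_map_algebraMap ℂ]
    refine aeval_eq_zero_of_forall_hasEigenvalue hf fun μ hμ => ?_
    have hre : 0 < μ.re := (Complex.pos_iff.mp (hpos μ hμ)).1
    have hμ_eq : μ = (μ.re : ℂ) := Complex.eq_re_of_ofReal_le (by exact_mod_cast (hpos μ hμ).le)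
    have hnode : q.eval μ.re = (√μ.re)⁻¹ :=
      Lagrange.eval_interpolate_at_node _ (Set.injOn_id _)
        (Finset.mem_image_of_mem _ (f.finite_hasEigenvalue.mem_toFinset.mpr hμ))
    have hroot : (q * X * q - 1).eval μ.re = 0 := by
      have hsqrt : √μ.re ≠ 0 := (Real.sqrt_pos.mpr hre).ne'
      rw [eval_sub, eval_mul, eval_mul, eval_X, eval_one, hnode]
      nth_rw 2 [← Real.mul_self_sqrt hre.le]
      field_simp
      ring
    rw [hμ_eq, eval_map_algebraMap, ← Complex.coe_algebraMap,
      aeval_algebraMap_apply_eq_algebraMap_eval, hroot, map_zero]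
  simpa [sub_eq_zero] using hq

end Module.End

theorem aeval_apply_mul_map {B : Type*} [Ring B] [Algebra ℂ B] {E T : Module.End ℂ B}
    (hT : ∀ x y, T (x * E y) = T x * E y) (q : ℝ[X]) (x y : B) :
    aeval T q (x * E y) = aeval T q x * E y := by
  have hcomm : aeval T q ∈ Subalgebra.centralizer ℝ {LinearMap.mulRight ℂ (E y)} := by
    refine Algebra.adjoin_le (Set.singleton_subset_iff.mpr ?_) (aeval_mem_adjoin_singleton ℝ T)
    rw [SetLike.mem_coe, Subalgebra.mem_centralizer_iff]
    rintro _ rfl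
    ext z
    exact (hT z y).symm
  exact (LinearMap.congr_fun ((Subalgebra.mem_centralizer_iff ℝ).mp hcomm _ rfl) x).symm

section StarAlgebra

variable {B : Type*} [Ring B] [StarRing B] [Algebra ℂ B]

def IsSymmetricWrt (E T : Module.End ℂ B) : Prop :=
  ∀ x y, E (star (T x) * y) = E (star x * T y)

namespace IsSymmetricWrt

variable {E T : Module.End ℂ B}

theorem pow (hT : IsSymmetricWrt E T) (k : ℕ) : IsSymmetricWrt E (T ^ k) := by
  induction k with
  | zero => intro x y; simp
  | succ k ih =>
    intro x y
    rw [pow_succ, Module.End.mul_apply, ih, hT, ← Module.End.mul_apply, (Commute.self_pow T k).eq]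

theorem aeval [StarModule ℂ B] (hT : IsSymmetricWrt E T) (q : ℝ[X]) :
    IsSymmetricWrt E (aeval T q) := by
  induction q using Polynomial.induction_on' with
  | add p q hp hq =>
    intro x y
    simp only [map_add, LinearMap.add_apply, star_add, add_mul, mul_add, hp x y, hq x y]
  | monomial k c =>
    intro x y
    simp only [aeval_monomial, Algebra.algebraMap_eq_smul_one, smul_mul_assoc, one_mul,
      LinearMap.smul_apply, ← Complex.coe_smul, star_smul, mul_smul_comm, map_smul,
      (hT.pow k) x y, Complex.star_def, Complex.conj_ofReal]

theorem apply_eq_zero_of_apply_apply_eq_zero (hT : IsSymmetricWrt E T)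
    (hE : ∀ x, E (star x * x) = 0 → x = 0) {w : B} (hw : T (T w) = 0) : T w = 0 :=
  hE _ (by rw [hT, hw, mul_zero, map_zero])

end IsSymmetricWrt

variable {ι : Type*} [Fintype ι]

def frameOperator (E : B →ₗ[ℂ] B) (b : ι → B) : Module.End ℂ B :=
  ∑ i, LinearMap.mulLeft ℂ (b i) ∘ₗ E ∘ₗ LinearMap.mulLeft ℂ (star (b i))

variable {E : B →ₗ[ℂ] B}

theorem frameOperator_apply (b : ι → B) (x : B) :
    frameOperator E b x = ∑ i, b i * E (star (b i) * x) := by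
  simp [frameOperator]

theorem frameOperator_comp (b : ι → B) {g : Module.End ℂ B} (hg : IsSymmetricWrt E g)
    (hgE : ∀ x y, g (x * E y) = g x * E y) :
    frameOperator E (g ∘ b) = g * frameOperator E b * g := by
  ext x
  simp only [frameOperator_apply, Function.comp_apply, Module.End.mul_apply, map_sum, hgE]
  exact Finset.sum_congr rfl fun i _ => by rw [hg]

theorem frameOperator_apply_mul_map (hE : ∀ x y, E (x * E y) = E x * E y) (b : ι → B)
    (x y : B) :
    frameOperator E b (x * E y) = frameOperator E b x * E y := by
  simp only [frameOperator_apply, Finset.sum_mul, mul_assoc, ← hE]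

end StarAlgebra

theorem LinearMap.map_star_of_isSelfAdjoint_apply {M N : Type*} [AddCommGroup M] [Module ℂ M]
    [StarAddMonoid M] [StarModule ℂ M] [AddCommGroup N] [Module ℂ N] [StarAddMonoid N]
    [StarModule ℂ N] (E : M →ₗ[ℂ] N) (hE : ∀ h, IsSelfAdjoint h → IsSelfAdjoint (E h)) (z : M) :
    E (star z) = star (E z) := by
  rw [← realPart_add_I_smul_imaginaryPart z]
  simp [(hE _ (ℜ z).prop).star_eq, (hE _ (ℑ z).prop).star_eq, (ℜ z).prop.star_eq,
    (ℑ z).prop.star_eq]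

section StarOrderedAlgebra

variable {B : Type*} [Ring B] [StarRing B] [Algebra ℂ B] [StarModule ℂ B] [PartialOrder B]
  [StarOrderedRing B]

theorem nonneg_of_smul_nonneg_of_ne_zero {a : B} {μ : ℂ} (ha : 0 ≤ a) (ha0 : a ≠ 0)
    (h : 0 ≤ μ • a) : 0 ≤ μ := by
  have hμ : star μ = μ := by
    have := (IsSelfAdjoint.of_nonneg h).star_eq
    rw [star_smul, (IsSelfAdjoint.of_nonneg ha).star_eq] at this
    exact smul_left_injective ℂ ha0 this
  obtain ⟨r, rfl⟩ : ∃ r : ℝ, (r : ℂ) = μ := ⟨μ.re, Complex.conj_eq_iff_re.mp hμ⟩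
  rw [Complex.zero_le_real]
  by_contra! hr
  have hc : (0 : ℂ) ≤ (-r : ℂ)⁻¹ := by
    rw [← Complex.ofReal_neg, ← Complex.ofReal_inv, Complex.zero_le_real]
    exact inv_nonneg.mpr (neg_nonneg.mpr hr.le)
  have hneg : (-r : ℂ)⁻¹ • (r : ℂ) • a = -a := by
    rw [smul_smul, inv_neg, neg_mul, inv_mul_cancel₀ (by exact_mod_cast hr.ne), neg_smul, one_smul]
  exact ha0 (le_antisymm (neg_nonneg.mp (hneg ▸ smul_nonneg hc h)) ha)

theorem LinearMap.isSelfAdjoint_apply_of_nonneg (E : B →ₗ[ℂ] B)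
    (hE : ∀ x, 0 ≤ E (star x * x)) {h : B} (hh : IsSelfAdjoint h) : IsSelfAdjoint (E h) := by
  have key : (2 : ℂ) • E h = E (star (1 + h) * (1 + h)) - E (star 1 * 1) - E (star h * h) := by
    rw [← map_sub, ← map_sub, ← map_smul, star_add, star_one, hh.star_eq, two_smul]
    noncomm_ring
  have h2 : IsSelfAdjoint ((2 : ℂ) • E h) := by
    rw [key]
    exact ((IsSelfAdjoint.of_nonneg (hE _)).sub (.of_nonneg (hE _))).sub (.of_nonneg (hE _))
  have := h2.star_eq
  rw [star_smul] at this
  exact smul_right_injective B (two_ne_zero (α := ℂ)) (by simpa using this)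

structure IsPosRangeBimodular (E : B →ₗ[ℂ] B) : Prop where
  nonneg : ∀ x, 0 ≤ E (star x * x)
  map_mul_left : ∀ x y, E (E x * y) = E x * E y
  map_mul_right : ∀ x y, E (x * E y) = E x * E y

variable {E : B →ₗ[ℂ] B} (hE : IsPosRangeBimodular E)
include hE

theorem IsPosRangeBimodular.star_map_star_mul (x y : B) :
    star (E (star x * y)) = E (star y * x) := by
  rw [← E.map_star_of_isSelfAdjoint_apply (fun _ => E.isSelfAdjoint_apply_of_nonneg hE.nonneg),
    star_mul, star_star]

variable {ι : Type*} [Fintype ι] (b : ι → B)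

theorem isSymmetricWrt_frameOperator : IsSymmetricWrt E (frameOperator E b) := by
  intro x y
  simp only [frameOperator_apply, star_sum, Finset.sum_mul, Finset.mul_sum, map_sum, star_mul,
    hE.star_map_star_mul]
  refine Finset.sum_congr rfl fun i _ => ?_
  rw [mul_assoc, hE.map_mul_left, ← mul_assoc, hE.map_mul_right]

theorem map_star_mul_frameOperator_self (x : B) :
    E (star x * frameOperator E b x) = ∑ i, star (E (star (b i) * x)) * E (star (b i) * x) := by
  simp only [frameOperator_apply, Finset.mul_sum, map_sum, ← mul_assoc, hE.map_mul_right,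
    hE.star_map_star_mul]

end StarOrderedAlgebra

section CStarAlgebra

variable {B : Type*} [NormedRing B] [StarRing B] [CStarRing B] [NormedAlgebra ℂ B]
  [StarModule ℂ B] [PartialOrder B] [StarOrderedRing B]
  {E : B →ₗ[ℂ] B} (hE : IsPosRangeBimodular E) (hfaith : ∀ x, E (star x * x) = 0 → x = 0)
include hE hfaith

theorem eq_zero_of_map_star_mul_frameOperator_self_eq_zero {ι : Type*} [Fintype ι] {b : ι → B}
    (hb : Submodule.span ℂ (Set.range b) = ⊤) {x : B}
    (hx : E (star x * frameOperator E b x) = 0) : x = 0 := by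
  rw [map_star_mul_frameOperator_self hE] at hx
  have hcoord (i : ι) : E (star (b i) * x) = 0 :=
    CStarRing.star_mul_self_eq_zero_iff _ |>.mp <|
      (Finset.sum_eq_zero_iff_of_nonneg fun i _ => star_mul_self_nonneg _).mp hx i
        (Finset.mem_univ i)
  suffices ∀ y ∈ Submodule.span ℂ (Set.range b), E (star y * x) = 0 from
    hfaith x (this x (hb ▸ Submodule.mem_top))
  intro y hy
  induction hy using Submodule.span_induction with
  | mem _ hz => obtain ⟨i, rfl⟩ := hz; exact hcoord i
  | zero => simp
  | add y z _ _ hy hz => simp [add_mul, hy, hz]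
  | smul c y _ hy => simp [hy]

theorem pos_of_hasEigenvalue_frameOperator {ι : Type*} [Fintype ι] {b : ι → B}
    (hb : Submodule.span ℂ (Set.range b) = ⊤) {μ : ℂ}
    (hμ : (frameOperator E b).HasEigenvalue μ) : 0 < μ := by
  obtain ⟨v, hv⟩ := hμ.exists_hasEigenvector
  have hSv : E (star v * frameOperator E b v) = μ • E (star v * v) := by
    rw [hv.apply_eq_smul, mul_smul_comm, map_smul]
  have hSv_nonneg : 0 ≤ E (star v * frameOperator E b v) := by
    rw [map_star_mul_frameOperator_self hE]
    exact Finset.sum_nonneg fun i _ => star_mul_self_nonneg _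
  have hSv_ne : E (star v * frameOperator E b v) ≠ 0 := fun h =>
    hv.2 (eq_zero_of_map_star_mul_frameOperator_self_eq_zero hE hfaith hb h)
  refine lt_of_le_of_ne (nonneg_of_smul_nonneg_of_ne_zero (hE.nonneg v)
    (fun h => hv.2 (hfaith v h)) (hSv ▸ hSv_nonneg)) ?_
  rintro rfl
  exact hSv_ne (by rw [hSv, zero_smul])

theorem exists_frameOperator_eq_one [FiniteDimensional ℂ B] :
    ∃ (n : ℕ) (u : Fin n → B), frameOperator E u = 1 := by
  let b := Module.finBasis ℂ B
  set S := frameOperator E b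
  have hS : IsSymmetricWrt E S := isSymmetricWrt_frameOperator hE b
  have hpos (μ : ℂ) : S.HasEigenvalue μ → 0 < μ :=
    pos_of_hasEigenvalue_frameOperator hE hfaith b.span_eq
  have hss (μ : ℂ) (hμ : S.HasEigenvalue μ) (v : B) :
      (S - μ • 1) ((S - μ • 1) v) = 0 → (S - μ • 1) v = 0 := by
    have hreal : S - μ • 1 = aeval S (X - C μ.re) := by
      have hμ_eq : μ = μ.re :=
        Complex.eq_re_of_ofReal_le (r := 0) (by exact_mod_cast (hpos μ hμ).le)
      nth_rw 1 [hμ_eq]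
      ext; simp [Algebra.algebraMap_eq_smul_one, Complex.coe_smul]
    rw [hreal]
    exact (hS.aeval _).apply_eq_zero_of_apply_apply_eq_zero hfaith
  obtain ⟨q, hq⟩ := Module.End.exists_aeval_mul_mul_aeval_eq_one hss hpos
  refine ⟨_, aeval S q ∘ b, ?_⟩
  rw [frameOperator_comp b (hS.aeval q)
    (aeval_apply_mul_map (frameOperator_apply_mul_map hE.map_mul_right b) q), hq]

end CStarAlgebra

theorem exists_pimsner_popa_basis_general
    {B : Type*} [NormedRing B] [StarRing B] [CStarRing B] [NormedAlgebra ℂ B]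
    [StarModule ℂ B] [PartialOrder B] [StarOrderedRing B] [FiniteDimensional ℂ B]
    (A : StarSubalgebra ℂ B) (E : B →ₗ[ℂ] B)
    (hmem : ∀ x : B, E x ∈ A)
    (hbimod : ∀ a ∈ A, ∀ b ∈ A, ∀ x : B, E (a * x * b) = a * E x * b)
    (hpos : ∀ x : B, 0 ≤ E (star x * x))
    (hfaithful : ∀ x : B, E (star x * x) = 0 → x = 0) :
    ∃ (n : ℕ) (u : Fin n → B), ∀ x : B, x = ∑ i, u i * E (star (u i) * x) := by
  have hE : IsPosRangeBimodular E :=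
    { nonneg := hpos
      map_mul_left := fun x y => by simpa using hbimod (E x) (hmem x) 1 (one_mem A) y
      map_mul_right := fun x y => by simpa using hbimod 1 (one_mem A) (E y) (hmem y) x }
  obtain ⟨n, u, hu⟩ := exists_frameOperator_eq_one hE hfaithful
  exact ⟨n, u, fun x => by simpa [frameOperator_apply] using (LinearMap.congr_fun hu x).symm⟩

/-- Pimsner–Popa orthonormal basis: if `B` is a finite-dimensional unital C*-algebra,
`A ⊆ B` a unital C*-subalgebra and `E : B → A` a faithful conditional expectation, then
there is a finite family `u₁, …, uₙ ∈ B` such that `x = ∑ i, uᵢ · E(uᵢ* x)` for all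
`x ∈ B`. -/
theorem exists_pimsner_popa_basis
    {B : Type*} [NormedRing B] [StarRing B] [CStarRing B] [NormedAlgebra ℂ B]
    [StarModule ℂ B] [PartialOrder B] [StarOrderedRing B] [FiniteDimensional ℂ B]
    (A : StarSubalgebra ℂ B) (E : B →ₗ[ℂ] B)
    (hmem : ∀ x : B, E x ∈ A)
    (hfix : ∀ a ∈ A, E a = a)
    (hbimod : ∀ a ∈ A, ∀ b ∈ A, ∀ x : B, E (a * x * b) = a * E x * b)
    (hpos : ∀ x : B, 0 ≤ E (star x * x))
    (hfaithful : ∀ x : B, E (star x * x) = 0 → x = 0) :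
    ∃ (n : ℕ) (u : Fin n → B), ∀ x : B, x = ∑ i, u i * E (star (u i) * x) :=
  exists_pimsner_popa_basis_general A E hmem hbimod hpos hfaithful
end

section
/- In a traceless Markov tower (M_n, E_n, e_n) of modulus d > 0, fix n ≥ 2 and suppose y ∈ M_{n+1} satisfies y z = 0 and z y = 0 for every z ∈ M_n e_n M_n (i.e. y annihilates the 'old stuff' ideal of M_{n+1} on both sides). Then y x = 0 and x y = 0 for every x ∈ M_{n-1} e_{n-1} M_{n-1}, and moreover x · E_{n+1}(y) = 0 and E_{n+1}(y) · x = 0 for every x ∈ M_{n-1} e_{n-1} M_{n-1} (so the new stuff comes from the old new stuff). -/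
/-!
`e_{n-1} = d² · e_{n-1} e_n e_{n-1}` by the Temperley–Lieb–Jones relation, so every element
`a e_{n-1} b` of `M_{n-1} e_{n-1} M_{n-1}` is also of the form `a' e_n b'` with `a', b' ∈ M_n`;
hence `y` annihilates it. Since `M_{n-1} e_{n-1} M_{n-1} ⊆ M_n`, the `M_n`-bimodularity of
`E_{n+1}` carries `x y = 0` and `y x = 0` over to `E_{n+1}(y)`.
-/

namespace MarkovTower

variable {B : Type*} [Ring B] [StarRing B] [Algebra ℂ B] [StarModule ℂ B]
  [PartialOrder B] [StarOrderedRing B] (T : MarkovTower B)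

theorem e_eq_smul_e_mul_e_succ_mul_e {n : ℕ} (hn : 1 ≤ n) :
    T.e n = ((T.d : ℂ) ^ 2) • (T.e n * T.e (n + 1) * T.e n) := by
  have hd : ((T.d : ℂ) ^ 2) ≠ 0 := pow_ne_zero 2 (by exact_mod_cast T.d_pos.ne')
  rw [T.e_tlj_up n hn, smul_smul, mul_inv_cancel₀ hd, one_smul]

theorem mul_e_mul_mem {n : ℕ} (hn : 1 ≤ n) {a b : B} (ha : a ∈ T.M n) (hb : b ∈ T.M n) :
    a * T.e n * b ∈ T.M (n + 1) :=
  mul_mem (mul_mem (T.M_le n ha) (T.e_mem n hn)) (T.M_le n hb)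

theorem exists_mul_e_mul_eq_mul_e_succ_mul {n : ℕ} (hn : 1 ≤ n) {a b : B}
    (ha : a ∈ T.M n) (hb : b ∈ T.M n) :
    ∃ a' ∈ T.M (n + 1), ∃ b' ∈ T.M (n + 1), a * T.e n * b = a' * T.e (n + 1) * b' := by
  refine ⟨((T.d : ℂ) ^ 2) • (a * T.e n), ?_, T.e n * b, ?_, ?_⟩
  · exact SMulMemClass.smul_mem _ (mul_mem (T.M_le n ha) (T.e_mem n hn))
  · exact mul_mem (T.e_mem n hn) (T.M_le n hb)
  · conv_lhs => rw [T.e_eq_smul_e_mul_e_succ_mul_e hn]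
    simp only [mul_smul_comm, smul_mul_assoc, mul_assoc]

theorem mul_E_succ_eq_zero {n : ℕ} {x y : B} (hx : x ∈ T.M n) (hy : y ∈ T.M (n + 1))
    (hxy : x * y = 0) : x * T.E (n + 1) y = 0 := by
  have h := T.E_bimod (n + 1) n.succ_pos x hx 1 (one_mem _) y hy
  rwa [mul_one, mul_one, hxy, map_zero, eq_comm] at h

theorem E_succ_mul_eq_zero {n : ℕ} {x y : B} (hx : x ∈ T.M n) (hy : y ∈ T.M (n + 1))
    (hyx : y * x = 0) : T.E (n + 1) y * x = 0 := by
  have h := T.E_bimod (n + 1) n.succ_pos 1 (one_mem _) x hx y hy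
  rwa [one_mul, one_mul, hyx, map_zero, eq_comm] at h

end MarkovTower

/-- In a traceless Markov tower, if `y ∈ M_{n+1}` (with `n ≥ 2`) annihilates the old stuff
`Mₙ eₙ Mₙ` on both sides, then `y` and `E_{n+1}(y)` annihilate `M_{n-1} e_{n-1} M_{n-1}`
on both sides: the new stuff comes from the old new stuff. -/
theorem MarkovTower.new_stuff_from_old_new_stuff
    {B : Type*} [Ring B] [StarRing B] [Algebra ℂ B] [StarModule ℂ B]
    [PartialOrder B] [StarOrderedRing B]
    (T : MarkovTower B) (n : ℕ) (hn : 2 ≤ n) (y : B) (hy : y ∈ T.M (n + 1))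
    (hyl : ∀ a ∈ T.M n, ∀ b ∈ T.M n, y * (a * T.e n * b) = 0)
    (hyr : ∀ a ∈ T.M n, ∀ b ∈ T.M n, (a * T.e n * b) * y = 0) :
    ∀ a ∈ T.M (n - 1), ∀ b ∈ T.M (n - 1),
      y * (a * T.e (n - 1) * b) = 0 ∧
      (a * T.e (n - 1) * b) * y = 0 ∧
      (a * T.e (n - 1) * b) * T.E (n + 1) y = 0 ∧
      T.E (n + 1) y * (a * T.e (n - 1) * b) = 0 := by
  obtain ⟨m, rfl⟩ : ∃ m, n = m + 1 := ⟨n - 1, by omega⟩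
  have hm : 1 ≤ m := by omega
  intro a ha b hb
  obtain ⟨a', ha', b', hb', hab⟩ := T.exists_mul_e_mul_eq_mul_e_succ_mul hm ha hb
  have hleft : y * (a * T.e m * b) = 0 := hab ▸ hyl a' ha' b' hb'
  have hright : (a * T.e m * b) * y = 0 := hab ▸ hyr a' ha' b' hb'
  have hx : a * T.e m * b ∈ T.M (m + 1) := T.mul_e_mul_mem hm ha hb
  exact ⟨hleft, hright, T.mul_E_succ_eq_zero hx hy hright, T.E_succ_mul_eq_zero hx hy hleft⟩
end

section
/- In a traceless Markov tower (M_n, E_n, e_n) of modulus d > 0, fix n ≥ 2 and suppose that M_n equals the linear span of M_{n-1} e_{n-1} M_{n-1} (i.e. the new stuff Y_n is zero). Then M_{n+1} equals the linear span of M_n e_n M_n (i.e. Y_{n+1} = 0); consequently the new stuff vanishes at all higher levels. -/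
namespace MarkovTower

variable {B : Type*} [Ring B] [StarRing B] [Algebra ℂ B] [StarModule ℂ B]
  [PartialOrder B] [StarOrderedRing B] (T : MarkovTower B)

def jonesSpan (k : ℕ) : Submodule ℂ B :=
  Submodule.span ℂ {z : B | ∃ a ∈ T.M k, ∃ b ∈ T.M k, z = a * T.e k * b}

theorem M_mono : Monotone T.M :=
  monotone_nat_of_le_succ T.M_le

theorem coe_jonesSpan_subset {k : ℕ} (hk : 1 ≤ k) :
    (T.jonesSpan k : Set B) ⊆ T.M (k + 1) := by
  refine (Submodule.span_le (p := Subalgebra.toSubmodule (T.M (k + 1)).toSubalgebra)).mpr ?_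
  rintro _ ⟨a, ha, b, hb, rfl⟩
  exact (mul_mem (mul_mem (T.M_le k ha) (T.e_mem k hk)) (T.M_le k hb) : _ ∈ T.M (k + 1))

theorem e_eq_smul_e_mul_e_mul_e {k : ℕ} (hk : 1 ≤ k) :
    T.e k = ((T.d : ℂ) ^ 2) • (T.e k * T.e (k + 1) * T.e k) := by
  have hd : ((T.d : ℂ) ^ 2) ≠ 0 := pow_ne_zero 2 (by exact_mod_cast T.d_pos.ne')
  rw [T.e_tlj_up k hk, smul_smul, mul_inv_cancel₀ hd, one_smul]

theorem mul_mem_jonesSpan_succ {k : ℕ} (hk : 1 ≤ k) {x : B} (hx : x ∈ T.M (k + 2))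
    {a b : B} (ha : a ∈ T.M k) (hb : b ∈ T.M k) :
    x * (a * T.e k * b) ∈ T.jonesSpan (k + 1) := by
  have hek : T.e k ∈ T.M (k + 1) := T.e_mem k hk
  have hxae : x * a * T.e k ∈ T.M (k + 2) :=
    mul_mem (mul_mem hx (T.M_mono (by omega) ha)) (T.M_le _ hek)
  obtain ⟨y, hy, hpull⟩ := T.pull_down (k + 1) (by omega) _ hxae
  have hrewrite : x * (a * T.e k * b)
      = ((T.d : ℂ) ^ 2) • (x * a * T.e k * T.e (k + 1) * (T.e k * b)) := by
    conv_lhs => rw [T.e_eq_smul_e_mul_e_mul_e hk]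
    simp only [smul_mul_assoc, mul_smul_comm, mul_assoc]
  rw [hrewrite, hpull]
  exact Submodule.smul_mem _ _
    (Submodule.subset_span ⟨y, hy, T.e k * b, mul_mem hek (T.M_le k hb), rfl⟩)

theorem mul_mem_jonesSpan_succ_of_mem {k : ℕ} (hk : 1 ≤ k) {x : B} (hx : x ∈ T.M (k + 2))
    {z : B} (hz : z ∈ T.jonesSpan k) : x * z ∈ T.jonesSpan (k + 1) := by
  induction hz using Submodule.span_induction with
  | mem z hz =>
    obtain ⟨a, ha, b, hb, rfl⟩ := hz
    exact T.mul_mem_jonesSpan_succ hk hx ha hb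
  | zero => simp
  | add u v _ _ hu hv => simpa [mul_add] using add_mem hu hv
  | smul c u _ hu => simpa [mul_smul_comm] using Submodule.smul_mem _ c hu

theorem coe_M_eq_jonesSpan_succ {k : ℕ} (hk : 1 ≤ k)
    (h : (T.M (k + 1) : Set B) = T.jonesSpan k) :
    (T.M (k + 2) : Set B) = T.jonesSpan (k + 1) := by
  refine Set.Subset.antisymm (fun x hx => ?_) (T.coe_jonesSpan_subset (by omega))
  have hone : (1 : B) ∈ T.jonesSpan k := by
    rw [← SetLike.mem_coe, ← h]
    exact one_mem _
  simpa using T.mul_mem_jonesSpan_succ_of_mem hk hx hone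

end MarkovTower

/-- In a traceless Markov tower, if the new stuff vanishes at level `n ≥ 2` (i.e. `Mₙ` is the
linear span of `M_{n-1} e_{n-1} M_{n-1}`), then it vanishes at level `n+1` and at all higher
levels: `M_{k+1}` is the linear span of `M_k e_k M_k` for all `k ≥ n`. -/
theorem MarkovTower.no_new_stuff_propagates
    {B : Type*} [Ring B] [StarRing B] [Algebra ℂ B] [StarModule ℂ B]
    [PartialOrder B] [StarOrderedRing B]
    (T : MarkovTower B) (n : ℕ) (hn : 2 ≤ n)
    (h : (T.M n : Set B) =
      ((Submodule.span ℂ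
        {z : B | ∃ a ∈ T.M (n - 1), ∃ b ∈ T.M (n - 1), z = a * T.e (n - 1) * b}
        : Submodule ℂ B) : Set B)) :
    ∀ k, n ≤ k →
      (T.M (k + 1) : Set B) =
        ((Submodule.span ℂ {z : B | ∃ a ∈ T.M k, ∃ b ∈ T.M k, z = a * T.e k * b}
          : Submodule ℂ B) : Set B) := by
  obtain ⟨m, rfl⟩ : ∃ m, n = m + 1 := ⟨n - 1, by omega⟩
  intro k hk
  induction k, hk using Nat.le_induction with
  | base => exact T.coe_M_eq_jonesSpan_succ (by omega) h
  | succ k hk ih => exact T.coe_M_eq_jonesSpan_succ (by omega) ih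
end
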